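/- A packed word w of length n avoids both patterns 121 and 212 if and only if there do not exist positions i < j < k with w_i = w_k ≠ w_j. The number of packed words of length n avoiding the patterns 121, 132, 212 and 213 is 3^{n-1} for n ≥ 1. -/

import Mathlib

/-- The maximum letter of a word (0 for the empty word). -/
def maxL (w : List ℕ) : ℕ := w.foldr max 0

/-- A word over the positive integers is packed if its set of letters is
`{1, …, m}` for some `m`. -/
def IsPacked (w : List ℕ) : Prop := ∀ x ∈ w, 1 ≤ x ∧ ∀ i, 1 ≤ i → i ≤ x → i ∈ w

/-- The packed word of `w`: replace the distinct letters `b₁ < … < b_r` of `w`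
by `1, …, r`. -/
def pack (w : List ℕ) : List ℕ :=
  w.map (fun x => (w.toFinset.sort (· ≤ ·)).idxOf x + 1)

/-- Stirling numbers of the second kind. -/
def stirling2 : ℕ → ℕ → ℕ
  | 0, 0 => 1
  | 0, _ + 1 => 0
  | _ + 1, 0 => 0
  | n + 1, k + 1 => (k + 1) * stirling2 n (k + 1) + stirling2 n k

/-- An ordered set partition of `{1, …, n}`: a sequence of nonempty pairwise
disjoint subsets whose union is `{1, …, n}`. -/
def IsOSP (n : ℕ) (P : List (Finset ℕ)) : Prop :=
  (∀ B ∈ P, B.Nonempty) ∧ P.Pairwise Disjoint ∧ P.foldr (· ∪ ·) ∅ = Finset.Icc 1 n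

/-- `Contains u p`: the word `u` contains the pattern `p`, i.e. there are
positions `i₁ < … < i_k` in `u` such that the subword `u_{i₁} … u_{i_k}` has
the same relative comparisons (equalities and strict inequalities) as `p`. -/
def Contains (u p : List ℕ) : Prop :=
  ∃ idx : List ℕ, idx.length = p.length ∧ idx.Chain' (· < ·) ∧
    (∀ i ∈ idx, i < u.length) ∧
    ∀ a b, a < p.length → b < p.length →
      compare (u.getD (idx.getD a 0) 0) (u.getD (idx.getD b 0) 0)
        = compare (p.getD a 0) (p.getD b 0)


/-! ### Auxiliary development -/

lemma cmp_congr {a b c d : ℕ} (h1 : a < b ↔ c < d) (h2 : b < a ↔ d < c) :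
    compare a b = compare c d := by
  rcases lt_trichotomy a b with h|h|h
  · rw [compare_lt_iff_lt.mpr h, eq_comm, compare_lt_iff_lt]; exact h1.mp h
  · rw [compare_eq_iff_eq.mpr h, eq_comm, compare_eq_iff_eq]; omega
  · rw [compare_gt_iff_gt.mpr h, eq_comm, compare_gt_iff_gt]; exact h2.mp h

lemma cmp_iff {a b c d : ℕ} (h : compare a b = compare c d) :
    (a < b ↔ c < d) ∧ (b < a ↔ d < c) := by
  rcases lt_trichotomy c d with hc|hc|hc
  · rw [compare_lt_iff_lt.mpr hc] at h; have := compare_lt_iff_lt.mp h; omega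
  · rw [compare_eq_iff_eq.mpr hc] at h; have := compare_eq_iff_eq.mp h; omega
  · rw [compare_gt_iff_gt.mpr hc] at h; have := compare_gt_iff_gt.mp h; omega

lemma contains_three (u : List ℕ) (p1 p2 p3 : ℕ) :
    Contains u [p1, p2, p3] ↔ ∃ i j k, i < j ∧ j < k ∧ k < u.length ∧
      compare (u.getD i 0) (u.getD j 0) = compare p1 p2 ∧
      compare (u.getD i 0) (u.getD k 0) = compare p1 p3 ∧
      compare (u.getD j 0) (u.getD k 0) = compare p2 p3 := by
  constructor
  · rintro ⟨idx, hlen, hch, hb, hcmp⟩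
    match idx, hlen with
    | [i, j, k], _ =>
      have hij : i < j := (List.isChain_cons_cons.mp hch).1
      have hjk : j < k := (List.isChain_cons_cons.mp (List.isChain_cons_cons.mp hch).2).1
      refine ⟨i, j, k, hij, hjk, hb k (by simp), ?_, ?_, ?_⟩
      · have := hcmp 0 1 (by norm_num) (by norm_num); simpa using this
      · have := hcmp 0 2 (by norm_num) (by norm_num); simpa using this
      · have := hcmp 1 2 (by norm_num) (by norm_num); simpa using this
  · rintro ⟨i, j, k, hij, hjk, hk, h1, h2, h3⟩
    obtain ⟨h1a, h1b⟩ := cmp_iff h1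
    obtain ⟨h2a, h2b⟩ := cmp_iff h2
    obtain ⟨h3a, h3b⟩ := cmp_iff h3
    refine ⟨[i, j, k], rfl, by simp [List.Chain', List.isChain_cons_cons, hij, hjk], ?_, ?_⟩
    · intro x hx; simp at hx; rcases hx with rfl|rfl|rfl <;> omega
    · intro a b ha hb
      simp only [List.length_cons, List.length_nil] at ha hb
      interval_cases a <;> interval_cases b <;>
        simp only [List.getD_cons_zero, List.getD_cons_succ] <;>
        (apply cmp_congr <;> omega)

lemma c121_iff (w : List ℕ) : Contains w [1, 2, 1] ↔ ∃ i j k, i < j ∧ j < k ∧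
    k < w.length ∧ w.getD i 0 < w.getD j 0 ∧ w.getD i 0 = w.getD k 0 := by
  rw [contains_three]
  constructor
  · rintro ⟨i, j, k, h1, h2, h3, d1, d2, d3⟩
    obtain ⟨a1, a2⟩ := cmp_iff d1; obtain ⟨b1, b2⟩ := cmp_iff d2
    exact ⟨i, j, k, h1, h2, h3, by omega, by omega⟩
  · rintro ⟨i, j, k, h1, h2, h3, e1, e2⟩
    exact ⟨i, j, k, h1, h2, h3, cmp_congr (by omega) (by omega),
      cmp_congr (by omega) (by omega), cmp_congr (by omega) (by omega)⟩

lemma c212_iff (w : List ℕ) : Contains w [2, 1, 2] ↔ ∃ i j k, i < j ∧ j < k ∧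
    k < w.length ∧ w.getD j 0 < w.getD i 0 ∧ w.getD i 0 = w.getD k 0 := by
  rw [contains_three]
  constructor
  · rintro ⟨i, j, k, h1, h2, h3, d1, d2, d3⟩
    obtain ⟨a1, a2⟩ := cmp_iff d1; obtain ⟨b1, b2⟩ := cmp_iff d2
    exact ⟨i, j, k, h1, h2, h3, by omega, by omega⟩
  · rintro ⟨i, j, k, h1, h2, h3, e1, e2⟩
    exact ⟨i, j, k, h1, h2, h3, cmp_congr (by omega) (by omega),
      cmp_congr (by omega) (by omega), cmp_congr (by omega) (by omega)⟩

lemma c132_iff (w : List ℕ) : Contains w [1, 3, 2] ↔ ∃ i j k, i < j ∧ j < k ∧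
    k < w.length ∧ w.getD i 0 < w.getD k 0 ∧ w.getD k 0 < w.getD j 0 := by
  rw [contains_three]
  constructor
  · rintro ⟨i, j, k, h1, h2, h3, d1, d2, d3⟩
    obtain ⟨a1, a2⟩ := cmp_iff d2; obtain ⟨b1, b2⟩ := cmp_iff d3
    exact ⟨i, j, k, h1, h2, h3, by omega, by omega⟩
  · rintro ⟨i, j, k, h1, h2, h3, e1, e2⟩
    exact ⟨i, j, k, h1, h2, h3, cmp_congr (by omega) (by omega),
      cmp_congr (by omega) (by omega), cmp_congr (by omega) (by omega)⟩

lemma c213_iff (w : List ℕ) : Contains w [2, 1, 3] ↔ ∃ i j k, i < j ∧ j < k ∧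
    k < w.length ∧ w.getD j 0 < w.getD i 0 ∧ w.getD i 0 < w.getD k 0 := by
  rw [contains_three]
  constructor
  · rintro ⟨i, j, k, h1, h2, h3, d1, d2, d3⟩
    obtain ⟨a1, a2⟩ := cmp_iff d1; obtain ⟨b1, b2⟩ := cmp_iff d2
    exact ⟨i, j, k, h1, h2, h3, by omega, by omega⟩
  · rintro ⟨i, j, k, h1, h2, h3, e1, e2⟩
    exact ⟨i, j, k, h1, h2, h3, cmp_congr (by omega) (by omega),
      cmp_congr (by omega) (by omega), cmp_congr (by omega) (by omega)⟩

/-- The allowed-triple condition. -/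
def Allowed (x y z : ℕ) : Prop :=
  (x = z → y = x) ∧ ¬(x < z ∧ z < y) ∧ ¬(y < x ∧ x < z)

/-- Every triple of positions in `w` is allowed. -/
def Good (w : List ℕ) : Prop :=
  ∀ i j k, i < j → j < k → k < w.length →
    Allowed (w.getD i 0) (w.getD j 0) (w.getD k 0)

lemma good_iff (w : List ℕ) :
    (¬ Contains w [1, 2, 1] ∧ ¬ Contains w [1, 3, 2] ∧
      ¬ Contains w [2, 1, 2] ∧ ¬ Contains w [2, 1, 3]) ↔ Good w := by
  rw [c121_iff, c132_iff, c212_iff, c213_iff]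
  constructor
  · rintro ⟨h1, h2, h3, h4⟩ i j k hij hjk hk
    refine ⟨?_, ?_, ?_⟩
    · intro he
      by_contra hne
      rcases lt_or_gt_of_ne hne with h'|h'
      · exact h3 ⟨i, j, k, hij, hjk, hk, h', he⟩
      · exact h1 ⟨i, j, k, hij, hjk, hk, h', he⟩
    · rintro ⟨ha, hb⟩; exact h2 ⟨i, j, k, hij, hjk, hk, ha, hb⟩
    · rintro ⟨ha, hb⟩; exact h4 ⟨i, j, k, hij, hjk, hk, ha, hb⟩
  · intro hg
    refine ⟨?_, ?_, ?_, ?_⟩ <;> rintro ⟨i, j, k, hij, hjk, hk, e1, e2⟩ <;>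
      obtain ⟨c1, c2, c3⟩ := hg i j k hij hjk hk <;> omega

/-! ### The word built from a sequence of comparisons -/

def compSeq : List ℕ → List Ordering
  | x :: y :: t => compare x y :: compSeq (y :: t)
  | _ => []

def shiftFun (h x : ℕ) : ℕ := if h ≤ x then x + 1 else x

def unshiftFun (h x : ℕ) : ℕ := if h < x then x - 1 else x

lemma shiftFun_lt {h x : ℕ} (hx : x < h) : shiftFun h x = x := if_neg (by omega)
lemma shiftFun_ge {h x : ℕ} (hx : h ≤ x) : shiftFun h x = x + 1 := if_pos hx

def fW : List Ordering → List ℕ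
  | [] => [1]
  | .eq :: s => (fW s).headD 0 :: fW s
  | .gt :: s => (maxL (fW s) + 1) :: fW s
  | .lt :: s => (fW s).headD 0 :: (fW s).map (shiftFun ((fW s).headD 0))

lemma fW_ne_nil (s : List Ordering) : fW s ≠ [] := by
  cases s with
  | nil => simp [fW]
  | cons o t => cases o <;> simp [fW]

lemma length_fW (s : List Ordering) : (fW s).length = s.length + 1 := by
  induction s with
  | nil => rfl
  | cons o t ih => cases o <;> simp [fW, ih]

lemma length_compSeq (w : List ℕ) : (compSeq w).length = w.length - 1 := by
  induction w with
  | nil => rfl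
  | cons x t ih =>
    cases t with
    | nil => rfl
    | cons y r => simp [compSeq] at ih ⊢; omega

lemma le_maxL {w : List ℕ} {x : ℕ} (h : x ∈ w) : x ≤ maxL w := by
  induction w with
  | nil => simp at h
  | cons a t ih =>
    rcases List.mem_cons.mp h with rfl|h
    · simp [maxL]
    · simp only [maxL, List.foldr_cons] at *; exact le_max_of_le_right (ih h)

lemma maxL_cons (a : ℕ) (t : List ℕ) : maxL (a :: t) = max a (maxL t) := by simp [maxL]

lemma maxL_mem {w : List ℕ} (h : w ≠ []) : maxL w ∈ w := by
  induction w with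
  | nil => exact absurd rfl h
  | cons a t ih =>
    by_cases ht : t = []
    · subst ht; simp [maxL]
    · rw [maxL_cons]
      rcases le_total (maxL t) a with hle|hle
      · rw [max_eq_left hle]; exact List.mem_cons_self
      · rw [max_eq_right hle]; exact List.mem_cons_of_mem _ (ih ht)

lemma headD_mem {w : List ℕ} (h : w ≠ []) : w.headD 0 ∈ w := by
  cases w with
  | nil => exact absurd rfl h
  | cons a t => simp

lemma getD_mem' {l : List ℕ} {i : ℕ} (h : i < l.length) : l.getD i 0 ∈ l := by
  rw [List.getD_eq_getElem l 0 h]; exact List.getElem_mem h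

lemma headD_eq_getD {l : List ℕ} (h : l ≠ []) : l.headD 0 = l.getD 0 0 := by
  cases l with
  | nil => exact absurd rfl h
  | cons a t => rfl

lemma packed_fW (s : List Ordering) : IsPacked (fW s) := by
  induction s with
  | nil => intro x hx; simp [fW] at hx; subst hx; simp [fW]; omega
  | cons o t ih =>
    have hne := fW_ne_nil t
    have hh := headD_mem hne
    cases o with
    | eq =>
      intro x hx
      rw [fW] at hx
      rcases List.mem_cons.mp hx with rfl|hx
      · exact ⟨(ih _ hh).1, fun i h1 h2 => List.mem_cons_of_mem _ ((ih _ hh).2 i h1 h2)⟩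
      · exact ⟨(ih _ hx).1, fun i h1 h2 => List.mem_cons_of_mem _ ((ih _ hx).2 i h1 h2)⟩
    | gt =>
      intro x hx
      rw [fW] at hx
      rcases List.mem_cons.mp hx with rfl|hx
      · refine ⟨by omega, fun i h1 h2 => ?_⟩
        rcases eq_or_lt_of_le h2 with rfl|h2
        · exact List.mem_cons_self
        · exact List.mem_cons_of_mem _
            ((ih _ (maxL_mem hne)).2 i h1 (by omega))
      · exact ⟨(ih _ hx).1, fun i h1 h2 => List.mem_cons_of_mem _ ((ih _ hx).2 i h1 h2)⟩
    | lt =>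
      have h1h : 1 ≤ (fW t).headD 0 := (ih _ hh).1
      have hM := le_maxL hh
      have hmem : ∀ i, 1 ≤ i → i ≤ maxL (fW t) + 1 → i ∈ fW (.lt :: t) := by
        intro i hi1 hi2
        rw [fW]
        rcases lt_trichotomy i ((fW t).headD 0) with hih|heq|hih
        · exact List.mem_cons_of_mem _ (List.mem_map.mpr
            ⟨i, (ih _ hh).2 i hi1 (by omega), shiftFun_lt hih⟩)
        · rw [heq]; exact List.mem_cons_self
        · refine List.mem_cons_of_mem _ (List.mem_map.mpr
            ⟨i - 1, (ih _ (maxL_mem hne)).2 (i-1) (by omega) (by omega), ?_⟩)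
          rw [shiftFun_ge (by omega)]; omega
      intro x hx
      rw [fW] at hx
      rcases List.mem_cons.mp hx with rfl|hx
      · exact ⟨h1h, fun i hi1 hi2 => hmem i hi1 (by omega)⟩
      · obtain ⟨y, hy, hxy⟩ := List.mem_map.mp hx
        have hy1 := (ih _ hy).1
        have hyM := le_maxL hy
        have hxb : 1 ≤ x ∧ x ≤ maxL (fW t) + 1 := by
          rcases le_or_gt ((fW t).headD 0) y with hc|hc
          · rw [shiftFun_ge hc] at hxy; omega
          · rw [shiftFun_lt hc] at hxy; omega
        exact ⟨hxb.1, fun i hi1 hi2 => hmem i hi1 (by omega)⟩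

lemma compSeq_cons (a : ℕ) {u : List ℕ} (hu : u ≠ []) :
    compSeq (a :: u) = compare a (u.headD 0) :: compSeq u := by
  cases u with
  | nil => exact absurd rfl hu
  | cons b t => simp [compSeq]

lemma lt_iff_of_sm {g : ℕ → ℕ} (hg : ∀ a b, a < b → g a < g b) (x y : ℕ) :
    x < y ↔ g x < g y := by
  constructor
  · exact hg x y
  · intro h
    rcases lt_trichotomy x y with h'|rfl|h'
    · exact h'
    · omega
    · have := hg y x h'; omega

lemma compSeq_map_sm {g : ℕ → ℕ} (hg : ∀ a b, a < b → g a < g b) (u : List ℕ) :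
    compSeq (u.map g) = compSeq u := by
  induction u with
  | nil => rfl
  | cons x t ih =>
    cases t with
    | nil => rfl
    | cons y r =>
      simp only [List.map_cons, compSeq] at ih ⊢
      rw [ih]
      congr 1
      exact cmp_congr (lt_iff_of_sm hg x y).symm (lt_iff_of_sm hg y x).symm

lemma shiftFun_sm (h : ℕ) : ∀ a b, a < b → shiftFun h a < shiftFun h b := by
  intro a b hab; unfold shiftFun; split <;> split <;> omega

lemma compSeq_fW (s : List Ordering) : compSeq (fW s) = s := by
  induction s with
  | nil => rfl
  | cons o t ih =>
    have hne := fW_ne_nil t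
    have hh := headD_mem hne
    cases o with
    | eq => rw [fW, compSeq_cons _ hne, ih, compare_eq_iff_eq.mpr rfl]
    | gt =>
      rw [fW, compSeq_cons _ hne, ih,
        compare_gt_iff_gt.mpr (by have := le_maxL hh; omega)]
    | lt =>
      have hne2 : (fW t).map (shiftFun ((fW t).headD 0)) ≠ [] := by
        simpa using hne
      rw [fW, compSeq_cons _ hne2]
      have hhd : ((fW t).map (shiftFun ((fW t).headD 0))).headD 0
          = (fW t).headD 0 + 1 := by
        obtain ⟨b, r, hr⟩ := List.exists_cons_of_ne_nil hne
        rw [hr]; simp [shiftFun_ge (le_refl _)]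
      rw [hhd, compare_lt_iff_lt.mpr (by omega),
        compSeq_map_sm (shiftFun_sm _), ih]

/-! ### `fW s` is good -/

lemma good_cons {a : ℕ} {u : List ℕ} (hu : Good u)
    (h2 : ∀ j k, j < k → k < u.length → Allowed a (u.getD j 0) (u.getD k 0)) :
    Good (a :: u) := by
  intro i j k hij hjk hk
  simp only [List.length_cons] at hk
  match i, j, k with
  | 0, j + 1, k + 1 =>
    simp only [List.getD_cons_zero, List.getD_cons_succ]
    exact h2 j k (by omega) (by omega)
  | i + 1, j + 1, k + 1 =>
    simp only [List.getD_cons_succ]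
    exact hu i j k (by omega) (by omega) (by omega)

lemma good_tail {a : ℕ} {u : List ℕ} (h : Good (a :: u)) : Good u := by
  intro i j k hij hjk hk
  have := h (i+1) (j+1) (k+1) (by omega) (by omega) (by simp; omega)
  simpa only [List.getD_cons_succ] using this

lemma shiftFun_facts (h x : ℕ) :
    (x < h ↔ shiftFun h x < h) ∧ (h ≤ x ↔ h < shiftFun h x) ∧ shiftFun h x ≠ h := by
  unfold shiftFun; split <;> omega

lemma shiftFun_lt_shiftFun (h x y : ℕ) : shiftFun h x < shiftFun h y ↔ x < y := by
  unfold shiftFun; split <;> split <;> omega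

lemma good_map_shift {h : ℕ} {u : List ℕ} (hu : Good u) : Good (u.map (shiftFun h)) := by
  intro i j k hij hjk hk
  simp only [List.length_map] at hk
  have e : ∀ m (hm : m < u.length),
      (u.map (shiftFun h)).getD m 0 = shiftFun h (u.getD m 0) := by
    intro m hm
    rw [List.getD_eq_getElem _ 0 (by simpa using hm), List.getD_eq_getElem _ 0 hm,
      List.getElem_map]
  rw [e i (by omega), e j (by omega), e k hk]
  obtain ⟨c1, c2, c3⟩ := hu i j k hij hjk hk
  have p1 := shiftFun_lt_shiftFun h (u.getD i 0) (u.getD j 0)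
  have p2 := shiftFun_lt_shiftFun h (u.getD j 0) (u.getD i 0)
  have p3 := shiftFun_lt_shiftFun h (u.getD i 0) (u.getD k 0)
  have p4 := shiftFun_lt_shiftFun h (u.getD k 0) (u.getD i 0)
  have p5 := shiftFun_lt_shiftFun h (u.getD j 0) (u.getD k 0)
  have p6 := shiftFun_lt_shiftFun h (u.getD k 0) (u.getD j 0)
  exact ⟨by omega, by omega, by omega⟩

lemma good_fW (s : List Ordering) : Good (fW s) := by
  induction s with
  | nil =>
    intro i j k hij hjk hk
    simp [fW] at hk; omega
  | cons o t ih =>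
    have hne := fW_ne_nil t
    cases o with
    | eq =>
      rw [fW]
      refine good_cons ih ?_
      intro j k hjk hk
      rw [headD_eq_getD hne]
      rcases Nat.eq_zero_or_pos j with rfl|hj
      · exact ⟨fun _ => rfl, by omega, by omega⟩
      · exact ih 0 j k hj hjk hk
    | gt =>
      rw [fW]
      refine good_cons ih ?_
      intro j k hjk hk
      have b1 : (fW t).getD j 0 ≤ maxL (fW t) := le_maxL (getD_mem' (by omega))
      have b2 : (fW t).getD k 0 ≤ maxL (fW t) := le_maxL (getD_mem' hk)
      exact ⟨by omega, by omega, by omega⟩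
    | lt =>
      rw [fW]
      refine good_cons (good_map_shift ih) ?_
      intro j k hjk hk
      simp only [List.length_map] at hk
      have e : ∀ m (hm : m < (fW t).length),
          ((fW t).map (shiftFun ((fW t).headD 0))).getD m 0
            = shiftFun ((fW t).headD 0) ((fW t).getD m 0) := by
        intro m hm
        rw [List.getD_eq_getElem _ 0 (by simpa using hm), List.getD_eq_getElem _ 0 hm,
          List.getElem_map]
      rw [e j (by omega), e k hk]
      set h := (fW t).headD 0 with hh
      have hget : (fW t).getD 0 0 = h := (headD_eq_getD hne).symm
      obtain ⟨f1k, f2k, f3k⟩ := shiftFun_facts h ((fW t).getD k 0)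
      rcases Nat.eq_zero_or_pos j with rfl|hj
      · rw [hget, shiftFun_ge (le_refl h)]
        exact ⟨by omega, by omega, by omega⟩
      · obtain ⟨c1, c2, c3⟩ := ih 0 j k hj hjk hk
        rw [hget] at c1 c2 c3
        obtain ⟨f1j, f2j, f3j⟩ := shiftFun_facts h ((fW t).getD j 0)
        have p := shiftFun_lt_shiftFun h ((fW t).getD k 0) ((fW t).getD j 0)
        exact ⟨by omega, by omega, by omega⟩

/-! ### Reconstruction -/

lemma mem_getD {z : ℕ} {tl : List ℕ} (h : z ∈ tl) :
    ∃ J, J < tl.length ∧ tl.getD J 0 = z := by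
  obtain ⟨J, hJ, e⟩ := List.mem_iff_getElem.mp h
  exact ⟨J, hJ, by rw [List.getD_eq_getElem _ 0 hJ]; exact e⟩

lemma not_mem_tail {x y : ℕ} {t : List ℕ} (hxy : x ≠ y) (hg : Good (x :: y :: t)) :
    x ∉ (y :: t) := by
  intro hmem
  obtain ⟨J, hJ, hJe⟩ := mem_getD hmem
  match J, hJ with
  | 0, _ => exact hxy (by simpa using hJe.symm)
  | J + 1, hJ =>
    have := (hg 0 1 (J + 2) (by omega) (by omega) (by simp; simpa using hJ)).1
    simp only [List.getD_cons_zero, List.getD_cons_succ] at this hJe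
    exact hxy ((this hJe.symm).symm)

lemma good_map_unshift {x : ℕ} {tl : List ℕ} (hg : Good tl)
    (hne : ∀ z ∈ tl, z ≠ x) : Good (tl.map (unshiftFun x)) := by
  intro i j k hij hjk hk
  simp only [List.length_map] at hk
  have e : ∀ m (hm : m < tl.length),
      (tl.map (unshiftFun x)).getD m 0 = unshiftFun x (tl.getD m 0) := by
    intro m hm
    rw [List.getD_eq_getElem _ 0 (by simpa using hm), List.getD_eq_getElem _ 0 hm,
      List.getElem_map]
  rw [e i (by omega), e j (by omega), e k hk]
  obtain ⟨c1, c2, c3⟩ := hg i j k hij hjk hk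
  have ni := hne _ (getD_mem' (show i < tl.length by omega))
  have nj := hne _ (getD_mem' (show j < tl.length by omega))
  have nk := hne _ (getD_mem' hk)
  unfold unshiftFun
  split <;> split <;> split <;> exact ⟨by omega, by omega, by omega⟩

lemma compSeq_map_mem {g : ℕ → ℕ} (u : List ℕ)
    (hg : ∀ a ∈ u, ∀ b ∈ u, (a < b ↔ g a < g b) ∧ (b < a ↔ g b < g a)) :
    compSeq (u.map g) = compSeq u := by
  induction u with
  | nil => rfl
  | cons a t ih =>
    cases t with
    | nil => rfl
    | cons b r =>
      simp only [List.map_cons, compSeq]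
      rw [show g b :: List.map g r = List.map g (b :: r) from rfl,
        ih (fun p hp q hq => hg p (List.mem_cons_of_mem _ hp) q (List.mem_cons_of_mem _ hq))]
      congr 1
      obtain ⟨q1, q2⟩ := hg a (by simp) b (by simp)
      exact (cmp_congr q1 q2).symm

lemma shift_unshift {x z : ℕ} (h : z ≠ x) : shiftFun x (unshiftFun x z) = z := by
  unfold shiftFun unshiftFun; split <;> split <;> omega

lemma recon : ∀ n (w : List ℕ), w.length ≤ n → w ≠ [] → IsPacked w → Good w →
    fW (compSeq w) = w := by
  intro n
  induction n with
  | zero => intro w hl hne; cases w <;> simp_all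
  | succ n ih =>
    intro w hl hne hp hg
    match w with
    | [x] =>
      have h1 : (1 : ℕ) ∈ [x] := (hp x (by simp)).2 1 le_rfl (hp x (by simp)).1
      simp at h1
      show fW (compSeq [x]) = [x]
      rw [← h1]
      rfl
    | x :: y :: t =>
      have hcs : compSeq (x :: y :: t) = compare x y :: compSeq (y :: t) := rfl
      have htl_ne : (y :: t) ≠ [] := by simp
      have hlt : (y :: t).length ≤ n := by simp at hl ⊢; omega
      have hy1 : 1 ≤ y := (hp y (by simp)).1
      have hx1 : 1 ≤ x := (hp x (by simp)).1
      rcases lt_trichotomy x y with hxy|hxy|hxy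
      · -- x < y  : lt case
        have hxne : x ≠ y := by omega
        have hnm : x ∉ (y :: t) := not_mem_tail hxne hg
        have hy : y = x + 1 := by
          by_contra hyne
          have hx1m : x + 1 ∈ x :: y :: t := (hp y (by simp)).2 (x+1) (by omega) (by omega)
          have hx1tl : x + 1 ∈ y :: t := by
            rcases List.mem_cons.mp hx1m with h'|h'
            · omega
            · exact h'
          obtain ⟨J, hJ, hJe⟩ := mem_getD hx1tl
          match J, hJ with
          | 0, _ => simp at hJe; omega
          | J + 1, hJ =>
            have := (hg 0 1 (J + 2) (by omega) (by omega) (by simp at hJ ⊢; omega)).2.1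
            simp only [List.getD_cons_zero, List.getD_cons_succ] at this hJe
            rw [hJe] at this
            omega
        have hzne : ∀ z ∈ (y :: t), z ≠ x := fun z hz he => hnm (he ▸ hz)
        set u := (y :: t).map (unshiftFun x) with hu
        have hu_ne : u ≠ [] := by simp [hu]
        have hu_len : u.length ≤ n := by simpa [hu] using hlt
        have hpu : IsPacked u := by
          intro z hz
          obtain ⟨z', hz', hze⟩ := List.mem_map.mp hz
          have hz'1 := (hp z' (List.mem_cons_of_mem _ hz')).1
          have hz'x := hzne z' hz'
          constructor
          · unfold unshiftFun at hze; split at hze <;> omega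
          · intro i hi1 hi2
            rcases lt_or_ge i x with hix|hix
            · have hiw : i ∈ x :: y :: t := by
                refine (hp z' (List.mem_cons_of_mem _ hz')).2 i hi1 ?_
                unfold unshiftFun at hze; split at hze <;> omega
              have hitl : i ∈ y :: t := by
                rcases List.mem_cons.mp hiw with h'|h'
                · omega
                · exact h'
              exact List.mem_map.mpr ⟨i, hitl, by unfold unshiftFun; rw [if_neg (by omega)]⟩
            · have hz'b : x < z' ∧ z = z' - 1 := by
                unfold unshiftFun at hze; split at hze <;> [exact ⟨by omega, by omega⟩; omega]
              have hiw : i + 1 ∈ x :: y :: t :=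
                (hp z' (List.mem_cons_of_mem _ hz')).2 (i+1) (by omega) (by omega)
              have hitl : i + 1 ∈ y :: t := by
                rcases List.mem_cons.mp hiw with h'|h'
                · omega
                · exact h'
              exact List.mem_map.mpr ⟨i + 1, hitl,
                by unfold unshiftFun; rw [if_pos (by omega)]; omega⟩
        have hgu : Good u := good_map_unshift (good_tail hg) hzne
        have hihu : fW (compSeq u) = u := ih u hu_len hu_ne hpu hgu
        have hcseq : compSeq u = compSeq (y :: t) := by
          refine compSeq_map_mem _ (fun a ha b hb => ?_)
          have hax := hzne a ha
          have hbx := hzne b hb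
          constructor <;> (unfold unshiftFun; split <;> split <;> omega)
        have huh : u.headD 0 = x := by
          simp only [hu, List.map_cons, List.headD_cons]
          unfold unshiftFun; rw [if_pos (by omega)]; omega
        rw [hcs, compare_lt_iff_lt.mpr hxy, fW, ← hcseq, hihu, huh]
        have : u.map (shiftFun x) = y :: t := by
          rw [hu, List.map_map]
          have : ∀ z ∈ (y :: t), (shiftFun x ∘ unshiftFun x) z = z := by
            intro z hz; exact shift_unshift (hzne z hz)
          rw [List.map_congr_left this]; exact List.map_id _
        rw [this]
      · -- x = y : eq case
        have hptl : IsPacked (y :: t) := by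
          intro z hz
          obtain ⟨hz1, hall⟩ := hp z (List.mem_cons_of_mem _ hz)
          refine ⟨hz1, fun i hi1 hi2 => ?_⟩
          rcases List.mem_cons.mp (hall i hi1 hi2) with h'|h'
          · rw [h', hxy]; simp
          · exact h'
        have hih : fW (compSeq (y :: t)) = y :: t :=
          ih _ hlt htl_ne hptl (good_tail hg)
        rw [hcs, compare_eq_iff_eq.mpr hxy, fW, hih]
        simp [hxy]
      · -- x > y : gt case
        have hxne : x ≠ y := by omega
        have hnm : x ∉ (y :: t) := not_mem_tail hxne hg
        have hble : ∀ z ∈ (y :: t), z ≤ x - 1 := by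
          intro z hz
          have hzx : z ≠ x := fun he => hnm (he ▸ hz)
          obtain ⟨J, hJ, hJe⟩ := mem_getD hz
          match J, hJ with
          | 0, _ => simp at hJe; omega
          | J + 1, hJ =>
            have := (hg 0 1 (J + 2) (by omega) (by omega) (by simp at hJ ⊢; omega)).2.2
            simp only [List.getD_cons_zero, List.getD_cons_succ] at this hJe
            rw [hJe] at this
            omega
        have hx2 : 2 ≤ x := by have := hble y (by simp); omega
        have hxm1 : x - 1 ∈ (y :: t) := by
          have : x - 1 ∈ x :: y :: t := (hp x (by simp)).2 (x-1) (by omega) (by omega)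
          rcases List.mem_cons.mp this with h'|h'
          · omega
          · exact h'
        have hmax : maxL (y :: t) = x - 1 := by
          have h1 := le_maxL hxm1
          have h2 := hble _ (maxL_mem htl_ne)
          omega
        have hptl : IsPacked (y :: t) := by
          intro z hz
          obtain ⟨hz1, hall⟩ := hp z (List.mem_cons_of_mem _ hz)
          refine ⟨hz1, fun i hi1 hi2 => ?_⟩
          have hzb := hble z hz
          rcases List.mem_cons.mp (hall i hi1 hi2) with h'|h'
          · omega
          · exact h'
        have hih : fW (compSeq (y :: t)) = y :: t :=
          ih _ hlt htl_ne hptl (good_tail hg)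
        rw [hcs, compare_gt_iff_gt.mpr hxy, fW, hih, hmax]
        congr 1
        omega

/-! ### Counting -/

instance : Fintype Ordering := ⟨{.lt, .eq, .gt}, by intro x; cases x <;> decide⟩

theorem cardOrdering : Fintype.card Ordering = 3 := rfl

def listEquiv (α : Type) (m : ℕ) : {s : List α // s.length = m} ≃ (Fin m → α) where
  toFun s i := s.1.get ⟨i, by rw [s.2]; exact i.2⟩
  invFun g := ⟨List.ofFn g, List.length_ofFn⟩
  left_inv s := by
    apply Subtype.ext
    apply List.ext_getElem
    · simp [s.2]
    · intro i h1 h2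
      simp [List.getElem_ofFn]
  right_inv g := by
    funext i
    simp [List.get_ofFn]

/-- A packed word avoids both patterns `121` and `212` iff there are no
positions `i < j < k` with `w_i = w_k ≠ w_j`; and the number of packed words
of length `n` avoiding the patterns `121`, `132`, `212` and `213` is
`3^(n-1)` for `n ≥ 1`. -/
theorem avoid_patterns (n : ℕ) (hn : 1 ≤ n) :
    (∀ w : List ℕ, IsPacked w →
      ((¬ Contains w [1, 2, 1] ∧ ¬ Contains w [2, 1, 2]) ↔
        ¬ ∃ i j k, i < j ∧ j < k ∧ k < w.length ∧
          w.getD i 0 = w.getD k 0 ∧ w.getD j 0 ≠ w.getD i 0)) ∧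
    Nat.card {w : List ℕ // w.length = n ∧ IsPacked w ∧
        ¬ Contains w [1, 2, 1] ∧ ¬ Contains w [1, 3, 2] ∧
        ¬ Contains w [2, 1, 2] ∧ ¬ Contains w [2, 1, 3]} = 3 ^ (n - 1) := by
  constructor
  · -- part 1
    intro w _
    rw [c121_iff, c212_iff]
    constructor
    · rintro ⟨h1, h2⟩ ⟨i, j, k, hij, hjk, hk, he, hne⟩
      rcases lt_or_gt_of_ne hne with h'|h'
      · exact h2 ⟨i, j, k, hij, hjk, hk, h', he⟩
      · exact h1 ⟨i, j, k, hij, hjk, hk, h', he⟩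
    · intro h
      constructor <;> rintro ⟨i, j, k, hij, hjk, hk, e1, e2⟩ <;>
        exact h ⟨i, j, k, hij, hjk, hk, e2, by omega⟩
  · -- part 2
    have hpred : ∀ w : List ℕ,
        (w.length = n ∧ IsPacked w ∧ ¬ Contains w [1, 2, 1] ∧ ¬ Contains w [1, 3, 2] ∧
          ¬ Contains w [2, 1, 2] ∧ ¬ Contains w [2, 1, 3]) ↔
        (w.length = n ∧ IsPacked w ∧ Good w) := by
      intro w
      constructor
      · rintro ⟨a, b, c⟩
        exact ⟨a, b, (good_iff w).mp c⟩
      · rintro ⟨a, b, c⟩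
        obtain ⟨c1, c2, c3, c4⟩ := (good_iff w).mpr c
        exact ⟨a, b, c1, c2, c3, c4⟩
    rw [Nat.card_congr (Equiv.subtypeEquivRight hpred)]
    have e : {w : List ℕ // w.length = n ∧ IsPacked w ∧ Good w} ≃
        {s : List Ordering // s.length = n - 1} :=
      { toFun := fun w => ⟨compSeq w.1, by rw [length_compSeq, w.2.1]⟩
        invFun := fun s => ⟨fW s.1, by
          refine ⟨?_, packed_fW _, good_fW _⟩
          rw [length_fW, s.2]; omega⟩
        left_inv := fun w => Subtype.ext (recon w.1.length w.1 le_rfl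
          (by have := w.2.1; intro h; rw [h] at this; simp at this; omega)
          w.2.2.1 w.2.2.2)
        right_inv := fun s => Subtype.ext (compSeq_fW s.1) }
    rw [Nat.card_congr e, Nat.card_congr (listEquiv Ordering (n - 1)),
      Nat.card_eq_fintype_card, Fintype.card_fun, Fintype.card_fin, cardOrdering]
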